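/- arXiv:0709.2345 — 5 statements merged into one kernel-verified Lean document; each statement's English description precedes it below -/
import Mathlib

section
/- For complex numbers α, β, γ, δ with all of Re(1+α+γ), Re(1+α+δ), Re(1+β+γ), Re(1+β+δ) > 1, the Dirichlet series Σ_{n≥1} σ_{α,β}(n) σ_{γ,δ}(n) n^{-(1+s)} converges and equals ζ(1+s+α+γ)ζ(1+s+α+δ)ζ(1+s+β+γ)ζ(1+s+β+δ)/ζ(2+2s+α+β+γ+δ), for Re(s) sufficiently large. -/
/-!
Expanding both divisor sums, the coefficient of `n ^ (-s)` is a sum over pairs of factorizations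
`n = x₁ x₂ = y₁ y₂`. Each such pair is uniquely `(x₁, x₂, y₁, y₂) = (a c, b d, a d, b c)` with
`c, d` coprime, so the series is `ζ(s+α+γ) ζ(s+β+δ)` times the sum of `c^{-(s+α+δ)} d^{-(s+β+γ)}`
over coprime pairs. Pulling the gcd out of an arbitrary pair of positive integers shows that this
last sum is `ζ(s+α+δ) ζ(s+β+γ) / ζ(2s+α+β+γ+δ)`.
-/

open Finset

/-- σ_{α,β}(n) = Σ_{n₁n₂ = n} n₁^{-α} n₂^{-β}. -/
noncomputable def sigmaShift (α β : ℂ) (n : ℕ) : ℂ :=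
  ∑ x ∈ n.divisorsAntidiagonal, (x.1 : ℂ) ^ (-α) * (x.2 : ℂ) ^ (-β)

theorem Complex.hasSum_mul {ι κ : Type*} {f : ι → ℂ} {g : κ → ℂ} {a b : ℂ} (hf : HasSum f a)
    (hg : HasSum g b) : HasSum (fun x : ι × κ => f x.1 * g x.2) (a * b) :=
  hf.mul hg (summable_mul_of_summable_norm hf.summable.norm hg.summable.norm)

theorem Complex.natCast_mul_cpow (m n : ℕ) (s : ℂ) :
    ((m * n : ℕ) : ℂ) ^ s = (m : ℂ) ^ s * (n : ℂ) ^ s := by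
  rw [Nat.cast_mul, natCast_mul_natCast_cpow]

theorem hasSum_pnat_cpow_neg_riemannZeta {w : ℂ} (hw : 1 < w.re) :
    HasSum (fun n : ℕ+ => ((n : ℕ) : ℂ) ^ (-w)) (riemannZeta w) := by
  have h : HasSum (fun n : ℕ+ => LSeries.term 1 w n) (riemannZeta w) :=
    hasSum_pnat_iff.mpr (by rw [LSeries.term_zero, add_zero]; exact LSeriesHasSum_one hw)
  convert h using 2 with n
  simp [Complex.cpow_neg]

namespace PNat

theorem exists_eq_mul_coprime (m n : ℕ+) :
    ∃ g c d : ℕ+, Nat.Coprime c d ∧ m = g * c ∧ n = g * d := by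
  obtain ⟨g, c, d, hg, hcd, hm, hn⟩ := Nat.exists_coprime' (Nat.gcd_pos_of_pos_left n m.pos)
  have hc : 0 < c := Nat.pos_of_mul_pos_right (hm ▸ m.pos)
  have hd : 0 < d := Nat.pos_of_mul_pos_right (hn ▸ n.pos)
  exact ⟨⟨g, hg⟩, ⟨c, hc⟩, ⟨d, hd⟩, hcd, PNat.eq (hm.trans (mul_comm c g)),
    PNat.eq (hn.trans (mul_comm d g))⟩

theorem eq_of_mul_eq_mul_coprime {g c d g' c' d' : ℕ+} (hcd : Nat.Coprime c d)
    (hcd' : Nat.Coprime c' d') (hc : g * c = g' * c') (hd : g * d = g' * d') :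
    g = g' ∧ c = c' ∧ d = d' := by
  have hg : g = g' := PNat.eq <| by
    simpa [Nat.gcd_mul_left, hcd.gcd_eq_one, hcd'.gcd_eq_one] using
      congrArg₂ Nat.gcd (congrArg PNat.val hc) (congrArg PNat.val hd)
  subst hg
  exact ⟨rfl, mul_left_cancel hc, mul_left_cancel hd⟩

theorem exists_eq_mul_of_mul_eq_mul {x₁ x₂ y₁ y₂ : ℕ+} (h : x₁ * x₂ = y₁ * y₂) :
    ∃ a b c d : ℕ+, Nat.Coprime c d ∧ x₁ = a * c ∧ x₂ = b * d ∧ y₁ = a * d ∧ y₂ = b * c := by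
  obtain ⟨a, c, d, hcd, rfl, rfl⟩ := exists_eq_mul_coprime x₁ y₁
  have hcx : c * x₂ = d * y₂ := mul_left_cancel (a := a) (by simpa only [mul_assoc] using h)
  obtain ⟨b, rfl⟩ : d ∣ x₂ := dvd_iff.mpr <|
    hcd.symm.dvd_of_dvd_mul_left ⟨y₂, by exact_mod_cast congrArg PNat.val hcx⟩
  refine ⟨a, b, c, d, hcd, rfl, mul_comm d b, rfl, mul_left_cancel (a := d) ?_⟩
  rw [← hcx]
  ac_rfl

end PNat

abbrev CoprimePairs : Type := {p : ℕ+ × ℕ+ // Nat.Coprime p.1 p.2}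

noncomputable def coprimePairsMulEquiv : ℕ+ × CoprimePairs ≃ ℕ+ × ℕ+ :=
  Equiv.ofBijective (fun x => (x.1 * x.2.1.1, x.1 * x.2.1.2)) <| by
    refine ⟨fun ⟨g, ⟨c, d⟩, hcd⟩ ⟨g', ⟨c', d'⟩, hcd'⟩ h => ?_, fun ⟨m, n⟩ => ?_⟩
    · obtain ⟨rfl, rfl, rfl⟩ := PNat.eq_of_mul_eq_mul_coprime hcd hcd'
        (congrArg Prod.fst h) (congrArg Prod.snd h)
      rfl
    · obtain ⟨g, c, d, hcd, rfl, rfl⟩ := PNat.exists_eq_mul_coprime m n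
      exact ⟨(g, ⟨(c, d), hcd⟩), rfl⟩

abbrev FactorizationPairs : Type :=
  Σ n : ℕ+, ↥((n : ℕ).divisorsAntidiagonal ×ˢ (n : ℕ).divisorsAntidiagonal)

def toFactorizationPairs : ℕ+ × ℕ+ × CoprimePairs → FactorizationPairs
  | (a, b, ⟨(c, d), _⟩) =>
    ⟨a * b * c * d, ⟨((a * c, b * d), (a * d, b * c)), by
      simp only [Finset.mem_product, Nat.mem_divisorsAntidiagonal, ne_eq, PNat.ne_zero,
        not_false_eq_true, and_true]
      constructor <;> (push_cast; ring)⟩⟩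

theorem toFactorizationPairs_injective : Function.Injective toFactorizationPairs := by
  rintro ⟨a, b, ⟨c, d⟩, hcd⟩ ⟨a', b', ⟨c', d'⟩, hcd'⟩ h
  have h' := congrArg (fun z : FactorizationPairs => (z.2 : (ℕ × ℕ) × ℕ × ℕ)) h
  simp only [toFactorizationPairs, Prod.mk.injEq, ← PNat.mul_coe, PNat.coe_inj] at h'
  obtain ⟨⟨hac, hbd⟩, had, -⟩ := h'
  obtain ⟨rfl, rfl, rfl⟩ := PNat.eq_of_mul_eq_mul_coprime hcd hcd' hac had
  obtain rfl := mul_right_cancel hbd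
  rfl

theorem toFactorizationPairs_surjective : Function.Surjective toFactorizationPairs := by
  rintro ⟨n, ⟨⟨⟨x₁, x₂⟩, y₁, y₂⟩, h⟩⟩
  simp only [Finset.mem_product, Nat.mem_divisorsAntidiagonal] at h
  obtain ⟨⟨hx, hn⟩, hy, -⟩ := h
  lift x₁ to ℕ+ using Nat.pos_of_ne_zero (left_ne_zero_of_mul (hx ▸ hn))
  lift x₂ to ℕ+ using Nat.pos_of_ne_zero (right_ne_zero_of_mul (hx ▸ hn))
  lift y₁ to ℕ+ using Nat.pos_of_ne_zero (left_ne_zero_of_mul (hy ▸ hn))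
  lift y₂ to ℕ+ using Nat.pos_of_ne_zero (right_ne_zero_of_mul (hy ▸ hn))
  have hxy : x₁ * x₂ = y₁ * y₂ := PNat.eq (by push_cast; omega)
  obtain ⟨a, b, c, d, hcd, rfl, rfl, rfl, rfl⟩ := PNat.exists_eq_mul_of_mul_eq_mul hxy
  refine ⟨(a, b, ⟨(c, d), hcd⟩), Sigma.subtype_ext (PNat.eq ?_) rfl⟩
  simp only [toFactorizationPairs, ← hx, PNat.mul_coe]
  ring

noncomputable def factorizationPairsEquiv : ℕ+ × ℕ+ × CoprimePairs ≃ FactorizationPairs :=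
  Equiv.ofBijective _ ⟨toFactorizationPairs_injective, toFactorizationPairs_surjective⟩

theorem hasSum_coprimePairs_cpow_neg {u v : ℂ} (hu : 1 < u.re) (hv : 1 < v.re) :
    HasSum (fun p : CoprimePairs => ((p.1.1 : ℕ) : ℂ) ^ (-u) * ((p.1.2 : ℕ) : ℂ) ^ (-v))
      (riemannZeta u * riemannZeta v / riemannZeta (u + v)) := by
  have huv : 1 < (u + v).re := by rw [Complex.add_re]; linarith
  let f (p : ℕ+ × ℕ+) : ℂ := ((p.1 : ℕ) : ℂ) ^ (-u) * ((p.2 : ℕ) : ℂ) ^ (-v)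
  have hf : HasSum f (riemannZeta u * riemannZeta v) :=
    (Complex.hasSum_mul (hasSum_pnat_cpow_neg_riemannZeta hu)
      (hasSum_pnat_cpow_neg_riemannZeta hv) :)
  obtain ⟨T, hT⟩ : Summable fun p : CoprimePairs => f p := hf.summable.subtype _
  have hfT : HasSum (fun x : ℕ+ × CoprimePairs => f (x.1 * x.2.1.1, x.1 * x.2.1.2))
      (riemannZeta (u + v) * T) := by
    convert (Complex.hasSum_mul (hasSum_pnat_cpow_neg_riemannZeta huv) hT :) using 1
    funext ⟨g, ⟨c, d⟩, _⟩
    simp only [f, PNat.mul_coe, Complex.natCast_mul_cpow, neg_add, ne_eq, Nat.cast_eq_zero,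
      PNat.ne_zero, not_false_eq_true, Complex.cpow_add]
    ring
  have hζT : riemannZeta (u + v) * T = riemannZeta u * riemannZeta v :=
    ((coprimePairsMulEquiv.hasSum_iff (f := f)).mp hfT).unique hf
  rwa [← hζT, mul_div_cancel_left₀ _ (riemannZeta_ne_zero_of_one_lt_re huv)]

theorem hasSum_sigmaShift_mul_sigmaShift_div_cpow {α β γ δ s : ℂ} (hαγ : 1 < (s + α + γ).re)
    (hαδ : 1 < (s + α + δ).re) (hβγ : 1 < (s + β + γ).re) (hβδ : 1 < (s + β + δ).re) :
    HasSum (fun n : ℕ+ => sigmaShift α β n * sigmaShift γ δ n / ((n : ℕ) : ℂ) ^ s)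
      (riemannZeta (s + α + γ) * riemannZeta (s + α + δ) * riemannZeta (s + β + γ) *
        riemannZeta (s + β + δ) / riemannZeta (2 * s + α + β + γ + δ)) := by
  let G (x : (ℕ × ℕ) × ℕ × ℕ) : ℂ :=
    (x.1.1 : ℂ) ^ (-α) * (x.1.2 : ℂ) ^ (-β) * ((x.2.1 : ℂ) ^ (-γ) * (x.2.2 : ℂ) ^ (-δ))
  let F (z : FactorizationPairs) : ℂ := G z.2 / ((z.1 : ℕ) : ℂ) ^ s
  have hF : HasSum (F ∘ toFactorizationPairs) (riemannZeta (s + α + γ) *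
      (riemannZeta (s + β + δ) * (riemannZeta (s + α + δ) * riemannZeta (s + β + γ) /
        riemannZeta (s + α + δ + (s + β + γ))))) := by
    convert (Complex.hasSum_mul (hasSum_pnat_cpow_neg_riemannZeta hαγ)
      (Complex.hasSum_mul (hasSum_pnat_cpow_neg_riemannZeta hβδ)
        (hasSum_coprimePairs_cpow_neg hαδ hβγ))) using 1
    funext ⟨a, b, ⟨c, d⟩, _⟩
    simp only [F, G, Function.comp_apply, toFactorizationPairs, PNat.mul_coe,
      Complex.natCast_mul_cpow, neg_add, ne_eq, Nat.cast_eq_zero, PNat.ne_zero, not_false_eq_true,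
      Complex.cpow_add, Complex.cpow_neg, div_eq_mul_inv]
    ring
  have hfiber (n : ℕ+) : HasSum (fun z => F ⟨n, z⟩)
      (sigmaShift α β n * sigmaShift γ δ n / ((n : ℕ) : ℂ) ^ s) := by
    rw [sigmaShift, sigmaShift, Finset.sum_mul_sum, ← Finset.sum_product', Finset.sum_div,
      ← Finset.sum_coe_sort]
    exact hasSum_fintype _
  convert (factorizationPairsEquiv.hasSum_iff.mp hF).sigma hfiber using 1
  rw [show 2 * s + α + β + γ + δ = s + α + δ + (s + β + γ) by ring]
  ring

/-- Ramanujan's identity: Σ_{n≥1} σ_{α,β}(n) σ_{γ,δ}(n) n^{-(1+s)}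
= ζ(1+s+α+γ)ζ(1+s+α+δ)ζ(1+s+β+γ)ζ(1+s+β+δ)/ζ(2+2s+α+β+γ+δ), for Re(s) large. -/
theorem sigmaShift_dirichlet_series (α β γ δ : ℂ)
    (h1 : 1 < (1 + α + γ).re) (h2 : 1 < (1 + α + δ).re)
    (h3 : 1 < (1 + β + γ).re) (h4 : 1 < (1 + β + δ).re) :
    ∃ S : ℝ, ∀ s : ℂ, S < s.re →
      HasSum (fun n : ℕ =>
          sigmaShift α β (n + 1) * sigmaShift γ δ (n + 1) / ((n + 1 : ℕ) : ℂ) ^ (1 + s))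
        (riemannZeta (1 + s + α + γ) * riemannZeta (1 + s + α + δ) *
            riemannZeta (1 + s + β + γ) * riemannZeta (1 + s + β + δ) /
          riemannZeta (2 + 2 * s + α + β + γ + δ)) := by
  refine ⟨0, fun s hs => ?_⟩
  have shift (x y : ℂ) (h : 1 < (1 + x + y).re) : 1 < (1 + s + x + y).re := by
    simp only [Complex.add_re, Complex.one_re] at h ⊢
    linarith
  rw [show 2 + 2 * s + α + β + γ + δ = 2 * (1 + s) + α + β + γ + δ by ring]
  exact hasSum_pnat_iff_hasSum_succ
    (f := fun n => sigmaShift α β n * sigmaShift γ δ n / (n : ℂ) ^ (1 + s)) |>.mp <|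
    hasSum_sigmaShift_mul_sigmaShift_div_cpow
      (shift α γ h1) (shift α δ h2) (shift β γ h3) (shift β δ h4)
end

section
/- For a prime p, a nonnegative integer h_p, and complex shifts α, β, γ, δ (with p^{-γ} ≠ p^{-δ} and the relevant geometric series convergent), one has Σ_{j=0}^∞ σ_{α,β}(p^j) σ_{γ,δ}(p^{j+h_p}) p^{-j(s+1)} = (p^{-γ} - p^{-δ})^{-1} [ p^{-γ(1+h_p)} / ((1 - p^{-1-s-α-γ})(1 - p^{-1-s-β-γ})) - p^{-δ(1+h_p)} / ((1 - p^{-1-s-α-δ})(1 - p^{-1-s-β-δ})) ]. -/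
open Finset

/-- σ_{α,β}(p^m) = Σ_{0≤j≤m} p^{-jα-(m-j)β}. -/
noncomputable def sigmaPP (α β : ℂ) (p m : ℕ) : ℂ :=
  ∑ j ∈ Finset.range (m + 1), (p : ℂ) ^ (-(j : ℂ) * α - ((m - j : ℕ) : ℂ) * β)

/-!
With `a = p^{-α}`, `b = p^{-β}`, `u = p^{-γ}`, `v = p^{-δ}` and `t = p^{-1-s}`, one has
`σ_{α,β}(p^j) = h_j(a, b)`, the complete homogeneous polynomial `∑_{i ≤ j} a^i b^{j-i}`, and
`σ_{γ,δ}(p^n) = (u^{n+1} - v^{n+1}) / (u - v)`. The series therefore splits into two series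
`∑_j h_j(a, b) (x t)^j` with `x = u, v`, and each of these is the Cauchy product of the geometric
series of `a x t` and `b x t`.
-/

section CompleteHomog

variable {R : Type*}

def completeHomog [CommSemiring R] (a b : R) (n : ℕ) : R :=
  ∑ i ∈ range (n + 1), a ^ i * b ^ (n - i)

theorem completeHomog_mul_sub [CommRing R] (u v : R) (n : ℕ) :
    completeHomog u v n * (u - v) = u ^ (n + 1) - v ^ (n + 1) := by
  simpa only [completeHomog, Nat.add_sub_cancel] using geom_sum₂_mul u v (n + 1)

theorem completeHomog_mul_pow [CommSemiring R] (a b x : R) (n : ℕ) :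
    completeHomog a b n * x ^ n = completeHomog (a * x) (b * x) n := by
  rw [completeHomog, sum_mul]
  refine sum_congr rfl fun i hi => ?_
  obtain ⟨k, rfl⟩ := Nat.exists_eq_add_of_le (Nat.lt_succ_iff.mp (mem_range.mp hi))
  rw [Nat.add_sub_cancel_left, mul_pow, mul_pow, pow_add]
  ring

variable [NormedField R] [CompleteSpace R]

theorem hasSum_completeHomog {a b : R} (ha : ‖a‖ < 1) (hb : ‖b‖ < 1) :
    HasSum (completeHomog a b) ((1 - a)⁻¹ * (1 - b)⁻¹) := by
  have h := hasSum_sum_range_mul_of_summable_norm (summable_norm_geometric_of_norm_lt_one ha)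
    (summable_norm_geometric_of_norm_lt_one hb)
  rwa [(hasSum_geometric_of_norm_lt_one ha).tsum_eq,
    (hasSum_geometric_of_norm_lt_one hb).tsum_eq] at h

theorem hasSum_completeHomog_mul_completeHomog_add {a b u v t : R} (huv : u ≠ v) (m : ℕ)
    (hau : ‖a * (u * t)‖ < 1) (hbu : ‖b * (u * t)‖ < 1)
    (hav : ‖a * (v * t)‖ < 1) (hbv : ‖b * (v * t)‖ < 1) :
    HasSum (fun j => completeHomog a b j * completeHomog u v (j + m) * t ^ j)
      ((u - v)⁻¹ * (u ^ (m + 1) / ((1 - a * (u * t)) * (1 - b * (u * t))) -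
        v ^ (m + 1) / ((1 - a * (v * t)) * (1 - b * (v * t))))) := by
  have huv' : u - v ≠ 0 := sub_ne_zero.mpr huv
  have hsplit : ∀ j, completeHomog a b j * completeHomog u v (j + m) * t ^ j =
      (u - v)⁻¹ * (u ^ (m + 1) * completeHomog (a * (u * t)) (b * (u * t)) j -
        v ^ (m + 1) * completeHomog (a * (v * t)) (b * (v * t)) j) := by
    intro j
    rw [← completeHomog_mul_pow, ← completeHomog_mul_pow,
      ← mul_div_cancel_right₀ (completeHomog u v (j + m)) huv', completeHomog_mul_sub]
    ring
  simp only [hsplit, div_eq_mul_inv, mul_inv]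
  exact ((hasSum_completeHomog hau hbu).mul_left _ |>.sub
    ((hasSum_completeHomog hav hbv).mul_left _)).mul_left _

end CompleteHomog

section NatCpow

variable {p : ℕ}

theorem sigmaPP_eq_completeHomog (hp : (p : ℂ) ≠ 0) (α β : ℂ) (n : ℕ) :
    sigmaPP α β p n = completeHomog ((p : ℂ) ^ (-α)) ((p : ℂ) ^ (-β)) n := by
  refine sum_congr rfl fun k _ => ?_
  rw [← Complex.cpow_nat_mul, ← Complex.cpow_nat_mul, ← Complex.cpow_add _ _ hp]
  ring_nf

theorem norm_natCast_cpow_neg_lt_one (hp : 1 < p) {w : ℂ} (hw : 0 < w.re) :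
    ‖(p : ℂ) ^ (-w)‖ < 1 := by
  rw [Complex.norm_natCast_cpow_of_pos (by omega)]
  exact Real.rpow_lt_one_of_one_lt_of_neg (by exact_mod_cast hp) (by simpa using hw)

end NatCpow

/-- Local computation: Σ_{j=0}^∞ σ_{α,β}(p^j) σ_{γ,δ}(p^{j+h_p}) p^{-j(s+1)}
= (p^{-γ}-p^{-δ})^{-1} [ p^{-γ(1+h_p)}/((1-p^{-1-s-α-γ})(1-p^{-1-s-β-γ}))
- p^{-δ(1+h_p)}/((1-p^{-1-s-α-δ})(1-p^{-1-s-β-δ})) ]. -/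
theorem sigmaPP_local_series (p : ℕ) (hp : p.Prime) (m : ℕ) (α β γ δ s : ℂ)
    (hγδ : (p : ℂ) ^ (-γ) ≠ (p : ℂ) ^ (-δ))
    (h1 : 0 < (1 + s + α + γ).re) (h2 : 0 < (1 + s + α + δ).re)
    (h3 : 0 < (1 + s + β + γ).re) (h4 : 0 < (1 + s + β + δ).re) :
    HasSum (fun j : ℕ => sigmaPP α β p j * sigmaPP γ δ p (j + m) *
        (p : ℂ) ^ (-(j : ℂ) * (s + 1)))
      (((p : ℂ) ^ (-γ) - (p : ℂ) ^ (-δ))⁻¹ *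
        ((p : ℂ) ^ (-γ * (1 + (m : ℂ))) /
            ((1 - (p : ℂ) ^ (-1 - s - α - γ)) * (1 - (p : ℂ) ^ (-1 - s - β - γ))) -
          (p : ℂ) ^ (-δ * (1 + (m : ℂ))) /
            ((1 - (p : ℂ) ^ (-1 - s - α - δ)) * (1 - (p : ℂ) ^ (-1 - s - β - δ))))) := by
  have hp0 : (p : ℂ) ≠ 0 := Nat.cast_ne_zero.mpr hp.ne_zero
  have hfactor : ∀ x w : ℂ, (p : ℂ) ^ (-1 - s - x - w) =
      (p : ℂ) ^ (-x) * ((p : ℂ) ^ (-w) * (p : ℂ) ^ (-(s + 1))) := fun x w => by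
    rw [← Complex.cpow_add _ _ hp0, ← Complex.cpow_add _ _ hp0]
    ring_nf
  have hpow_m : ∀ w : ℂ, (p : ℂ) ^ (-w * (1 + (m : ℂ))) = ((p : ℂ) ^ (-w)) ^ (m + 1) := fun w => by
    rw [← Complex.cpow_nat_mul]
    push_cast
    ring_nf
  have hpow_j : ∀ j : ℕ, (p : ℂ) ^ (-(j : ℂ) * (s + 1)) = ((p : ℂ) ^ (-(s + 1))) ^ j := fun j => by
    rw [← Complex.cpow_nat_mul]
    ring_nf
  have hnorm : ∀ x w : ℂ, 0 < (1 + s + x + w).re →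
      ‖(p : ℂ) ^ (-x) * ((p : ℂ) ^ (-w) * (p : ℂ) ^ (-(s + 1)))‖ < 1 := fun x w h => by
    rw [← hfactor]
    simpa only [neg_add', sub_eq_add_neg] using norm_natCast_cpow_neg_lt_one hp.one_lt h
  simp only [sigmaPP_eq_completeHomog hp0, hpow_j, hpow_m, hfactor]
  exact hasSum_completeHomog_mul_completeHomog_add hγδ m
    (hnorm α γ h1) (hnorm β γ h3) (hnorm α δ h2) (hnorm β δ h4)
end

section
/- For Re(a+b) > 1 and Re(c) > 0, Σ_{r≥1} Σ_{l≥1} c_l(r) l^{-(a+b)} r^{-(1+c)} = ζ(1+c) Σ_{l≥1} l^{-(a+b+c)} Σ_{d|l} d^c μ(d), where c_l(r) is the Ramanujan sum. -/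
/-!
Detecting `gcd(a, l) = 1` by `∑_{d ∣ gcd(a, l)} μ(d)` and summing the resulting geometric
series gives `c_l(r) = ∑_{d ∣ l, d ∣ r} d μ(l/d)`, i.e. `c_·(r)` is the Dirichlet convolution
of `d ↦ d [d ∣ r]` with `μ`. Hence, with `s = a + b` and `σ_w(r) = ∑_{d ∣ r} d^w`,
`∑_l c_l(r) l^{-s} = σ_{1-s}(r) L(μ, s)` and `∑_r σ_{1-s}(r) r^{-(1+c)} = ζ(1+c) ζ(s+c)`.
On the other side, `∑_{d ∣ l} d^c μ(d)` is the convolution of `d^c μ(d)` with `1`, whose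
L-series at `s + c` is `L(μ, s) ζ(s+c)`.
-/

open Finset ArithmeticFunction

/-- The Ramanujan sum c_l(r) = Σ*_{a mod l} e(ar/l), sum over a coprime to l. -/
noncomputable def ramanujanSum (l r : ℕ) : ℂ :=
  ∑ a ∈ Finset.range l, if Nat.gcd a l = 1 then
    Complex.exp (2 * Real.pi * Complex.I * a * r / l) else 0

open scoped ArithmeticFunction.Moebius LSeries.notation

theorem Finset.sum_range_filter_dvd {M : Type*} [AddCommMonoid M] {d l : ℕ} (hd : d ∣ l)
    (f : ℕ → M) : ∑ a ∈ range l with d ∣ a, f a = ∑ m ∈ range (l / d), f (d * m) := by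
  obtain rfl | hd0 := eq_or_ne d 0
  · simp [zero_dvd_iff.mp hd]
  obtain ⟨q, rfl⟩ := hd
  rw [Nat.mul_div_cancel_left q (Nat.pos_of_ne_zero hd0),
    ← sum_image fun _ _ _ _ h ↦ Nat.eq_of_mul_eq_mul_left (Nat.pos_of_ne_zero hd0) h]
  congr 1
  ext a
  simp only [mem_filter, mem_range, mem_image]
  constructor
  · rintro ⟨ha, m, rfl⟩
    exact ⟨m, Nat.lt_of_mul_lt_mul_left ha, rfl⟩
  · rintro ⟨m, hm, rfl⟩
    exact ⟨Nat.mul_lt_mul_of_pos_left hm (Nat.pos_of_ne_zero hd0), dvd_mul_right d m⟩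

theorem ArithmeticFunction.sum_divisors_moebius {R : Type*} [Ring R] (n : ℕ) :
    ∑ d ∈ n.divisors, (μ d : R) = if n = 1 then 1 else 0 := by
  have h := congr_arg (· n) (coe_moebius_mul_coe_zeta (R := R))
  simp only [coe_mul_zeta_apply, intCoe_apply, one_apply] at h
  exact h

namespace IsPrimitiveRoot

variable {R : Type*} [CommRing R] [IsDomain R] {ζ : R} {l : ℕ}

theorem sum_range_pow_mul (hζ : IsPrimitiveRoot ζ l) (r : ℕ) :
    ∑ a ∈ range l, ζ ^ (a * r) = if l ∣ r then (l : R) else 0 := by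
  simp_rw [mul_comm _ r, pow_mul]
  split_ifs with h
  · simp [(hζ.pow_eq_one_iff_dvd r).mpr h]
  · have hne : ζ ^ r ≠ 1 := mt (hζ.pow_eq_one_iff_dvd r).mp h
    refine eq_zero_of_ne_zero_of_mul_left_eq_zero (sub_ne_zero_of_ne hne.symm) ?_
    rw [mul_neg_geom_sum, ← pow_mul, mul_comm, pow_mul, hζ.pow_eq_one, one_pow, sub_self]

theorem sum_coprime_pow_mul (hζ : IsPrimitiveRoot ζ l) (r : ℕ) :
    ∑ a ∈ range l with a.Coprime l, ζ ^ (a * r)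
      = ∑ d ∈ l.divisors, (μ d : R) * if l / d ∣ r then ((l / d : ℕ) : R) else 0 := by
  obtain rfl | hl := eq_or_ne l 0
  · simp
  have hcoprime (a : ℕ) :
      (if a.Coprime l then 1 else 0 : R) = ∑ d ∈ l.divisors with d ∣ a, (μ d : R) := by
    have hgcd : {d ∈ l.divisors | d ∣ a} = (a.gcd l).divisors := by
      rw [← Nat.divisors_filter_dvd_of_dvd hl (Nat.gcd_dvd_right a l)]
      exact filter_congr fun d hd ↦ by simp [Nat.dvd_gcd_iff, Nat.dvd_of_mem_divisors hd]
    rw [hgcd, sum_divisors_moebius]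
  calc ∑ a ∈ range l with a.Coprime l, ζ ^ (a * r)
      = ∑ a ∈ range l, ∑ d ∈ l.divisors with d ∣ a, (μ d : R) * ζ ^ (a * r) := by
        rw [sum_filter]
        refine sum_congr rfl fun a _ ↦ ?_
        rw [← sum_mul, ← hcoprime, ite_zero_mul, one_mul]
    _ = ∑ d ∈ l.divisors, (μ d : R) * ∑ a ∈ range l with d ∣ a, ζ ^ (a * r) := by
        simp_rw [sum_filter, sum_comm (s := range l), mul_sum, mul_ite, mul_zero]
    _ = _ := by
        refine sum_congr rfl fun d hd ↦ ?_
        have hdl := Nat.dvd_of_mem_divisors hd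
        rw [sum_range_filter_dvd hdl,
          ← (hζ.pow_of_dvd (Nat.ne_of_gt (Nat.pos_of_mem_divisors hd)) hdl).sum_range_pow_mul r]
        simp only [← pow_mul, mul_assoc]

end IsPrimitiveRoot

open LSeries

theorem ramanujanSum_eq_sum_coprime (l r : ℕ) :
    ramanujanSum l r
      = ∑ a ∈ range l with a.Coprime l, Complex.exp (2 * Real.pi * Complex.I / l) ^ (a * r) := by
  rw [ramanujanSum, sum_filter]
  refine sum_congr rfl fun a _ ↦ if_congr Iff.rfl ?_ rfl
  rw [← Complex.exp_nat_mul]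
  push_cast
  ring_nf

-- The classical formula `c_l(r) = ∑_{d ∣ gcd(l, r)} d μ(l/d)`.
theorem ramanujanSum_eq_convolution (r : ℕ) :
    (ramanujanSum · r) = (fun d ↦ if d ∣ r then (d : ℂ) else 0) ⍟ ↗μ := by
  ext l
  rcases eq_or_ne l 0 with rfl | hl
  · simp [ramanujanSum]
  rw [ramanujanSum_eq_sum_coprime, (Complex.isPrimitiveRoot_exp l hl).sum_coprime_pow_mul,
    convolution_def]
  dsimp only
  rw [Nat.sum_divisorsAntidiagonal' fun d e ↦ (if d ∣ r then (d : ℂ) else 0) * μ e]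
  simp only [mul_comm]

theorem LSeries_eq_tsum_succ (f : ℕ → ℂ) (s : ℂ) :
    LSeries f s = ∑' n : ℕ, f (n + 1) / ((n + 1 : ℕ) : ℂ) ^ s := by
  rw [LSeries, ← tsum_pnat_eq_tsum_of_eq_zero (term_zero f s), tsum_pnat_eq_tsum_succ]
  exact tsum_congr fun n ↦ term_of_ne_zero n.succ_ne_zero f s

theorem LSeries.term_cpow_mul (f : ℕ → ℂ) (w z : ℂ) :
    term (fun n ↦ (n : ℂ) ^ w * f n) z = term f (z - w) := by
  ext n
  rcases eq_or_ne n 0 with rfl | hn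
  · simp
  rw [term_of_ne_zero hn, term_of_ne_zero hn, Complex.cpow_sub _ _ (Nat.cast_ne_zero.mpr hn)]
  field_simp

theorem LSeries_cpow_mul (f : ℕ → ℂ) (w z : ℂ) :
    LSeries (fun n ↦ (n : ℂ) ^ w * f n) z = LSeries f (z - w) := by
  rw [LSeries, term_cpow_mul, LSeries]

theorem LSeriesSummable_cpow_mul_iff {f : ℕ → ℂ} {w z : ℂ} :
    LSeriesSummable (fun n ↦ (n : ℂ) ^ w * f n) z ↔ LSeriesSummable f (z - w) := by
  rw [LSeriesSummable, term_cpow_mul, LSeriesSummable]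

theorem LSeries_sum_divisors {f : ℕ → ℂ} {z : ℂ} (hf : LSeriesSummable f z) (hz : 1 < z.re) :
    LSeries (fun n ↦ ∑ d ∈ n.divisors, f d) z = LSeries f z * riemannZeta z := by
  have hconv : f ⍟ 1 = fun n ↦ ∑ d ∈ n.divisors, f d := by
    simp [convolution_def, Nat.sum_divisorsAntidiagonal fun d _ ↦ f d]
  rw [← hconv, LSeries_convolution' hf (LSeriesSummable_one_iff.mpr hz),
    LSeries_one_eq_riemannZeta hz]

theorem LSeries_sum_divisors_cpow {w z : ℂ} (hw : 1 < (z - w).re) (hz : 1 < z.re) :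
    LSeries (fun n ↦ ∑ d ∈ n.divisors, (d : ℂ) ^ w) z = riemannZeta (z - w) * riemannZeta z := by
  have h := LSeries_cpow_mul 1 w z
  have hs := (LSeriesSummable_cpow_mul_iff (f := 1)).mpr (LSeriesSummable_one_iff.mpr hw)
  simp only [Pi.one_apply, mul_one] at h hs
  rw [LSeries_sum_divisors hs hz, h, LSeries_one_eq_riemannZeta hw]

theorem LSeriesHasSum_ite_dvd {r : ℕ} (hr : r ≠ 0) (s : ℂ) :
    LSeriesHasSum (fun d ↦ if d ∣ r then (d : ℂ) else 0) s
      (∑ d ∈ r.divisors, (d : ℂ) ^ (1 - s)) := by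
  have hterm : ∀ d ∈ r.divisors,
      term (fun d ↦ if d ∣ r then (d : ℂ) else 0) s d = d ^ (1 - s) := by
    intro d hd
    have hd0 : d ≠ 0 := Nat.ne_of_gt (Nat.pos_of_mem_divisors hd)
    rw [term_of_ne_zero hd0, if_pos (Nat.dvd_of_mem_divisors hd),
      Complex.cpow_sub _ _ (Nat.cast_ne_zero.mpr hd0), Complex.cpow_one]
  rw [LSeriesHasSum, ← sum_congr rfl hterm]
  refine hasSum_sum_of_ne_finset_zero fun d hd ↦ ?_
  rcases eq_or_ne d 0 with rfl | hd0
  · exact term_zero _ s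
  · rw [term_of_ne_zero hd0, if_neg (by simpa [hr] using hd), zero_div]

theorem LSeries_ramanujanSum {r : ℕ} (hr : r ≠ 0) {s : ℂ} (hs : 1 < s.re) :
    LSeries (ramanujanSum · r) s = (∑ d ∈ r.divisors, (d : ℂ) ^ (1 - s)) * LSeries ↗μ s := by
  rw [ramanujanSum_eq_convolution, (LSeriesHasSum_ite_dvd hr s).LSeries_eq.symm,
    LSeries_convolution' (LSeriesHasSum_ite_dvd hr s).LSeriesSummable
      (LSeriesSummable_moebius_iff.mpr hs)]

/-- Reduction of the double sum over Ramanujan sums: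
Σ_{r,l≥1} c_l(r) l^{-(a+b)} r^{-(1+c)} = ζ(1+c) Σ_{l≥1} l^{-(a+b+c)} Σ_{d|l} d^c μ(d). -/
theorem ramanujan_double_sum (a b c : ℂ) (hab : 1 < (a + b).re) (hc : 0 < c.re) :
    (∑' r : ℕ, ∑' l : ℕ,
        ramanujanSum (l + 1) (r + 1) / (((l + 1 : ℕ) : ℂ) ^ (a + b) * ((r + 1 : ℕ) : ℂ) ^ (1 + c)))
      = riemannZeta (1 + c) *
        ∑' l : ℕ, (((l + 1 : ℕ) : ℂ) ^ (a + b + c))⁻¹ *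
          ∑ d ∈ (l + 1).divisors, (d : ℂ) ^ c * (moebius d : ℂ) := by
  set s := a + b
  have h1c : 1 < (1 + c).re := by rw [Complex.add_re, Complex.one_re]; linarith
  have hsc : 1 < (s + c).re := by rw [Complex.add_re]; linarith
  have hinner (r : ℕ) : ∑' l : ℕ,
      ramanujanSum (l + 1) (r + 1) / (((l + 1 : ℕ) : ℂ) ^ s * ((r + 1 : ℕ) : ℂ) ^ (1 + c))
        = (∑ d ∈ (r + 1).divisors, (d : ℂ) ^ (1 - s)) / ((r + 1 : ℕ) : ℂ) ^ (1 + c)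
          * LSeries ↗μ s := by
    rw [div_mul_eq_mul_div, ← LSeries_ramanujanSum r.succ_ne_zero hab, LSeries_eq_tsum_succ,
      ← tsum_div_const]
    simp_rw [div_div]
  have hsigma := LSeries_sum_divisors_cpow (w := 1 - s) (z := 1 + c)
    (by convert hsc using 2; ring) h1c
  rw [show 1 + c - (1 - s) = s + c by ring, LSeries_eq_tsum_succ] at hsigma
  have hmoebius := LSeries_sum_divisors (f := fun n ↦ (n : ℂ) ^ c * μ n) (z := s + c)
    (by rwa [LSeriesSummable_cpow_mul_iff, add_sub_cancel_right, LSeriesSummable_moebius_iff]) hsc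
  rw [LSeries_cpow_mul, add_sub_cancel_right, LSeries_eq_tsum_succ] at hmoebius
  simp_rw [hinner, tsum_mul_right, hsigma, inv_mul_eq_div, hmoebius]
  ring
end

section
/- For a prime p, a positive integer h_p, and complex a, b, c with Re(b+c) > 0 and Re(a+b+c) > 0, one has Σ_{j=1}^∞ (p^{h_p}, p^j)^a p^{-j(a+b+c)} = p^{-b-c} (1 - p^{-a-b-c} - p^{h_p(-b-c)} + p^{-a} p^{h_p(-b-c)}) / ((1 - p^{-b-c})(1 - p^{-a-b-c})), where (p^{h_p}, p^j) = p^{min(h_p, j)}. -/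
/-!
Put `q = p^{-(b+c)}` and `r = p^{-(a+b+c)}`. The `j`-th term equals `q^j` while `j ≤ m` and
`q^m r^{j-m}` afterwards, so the series is a finite geometric sum followed by a convergent
geometric tail; the growth conditions on `b + c` and `a + b + c` say exactly that `|q|, |r| < 1`.
-/

/-- The exponent `j + 1 - m` is truncated subtraction, so it vanishes for `j < m`. -/
theorem hasSum_pow_min_mul_pow_sub {K : Type*} [NormedField K] {q r : K} (hq : q ≠ 1)
    (hr : ‖r‖ < 1) (m : ℕ) :
    HasSum (fun j : ℕ => q ^ min m (j + 1) * r ^ (j + 1 - m))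
      (q * (1 - q ^ m) / (1 - q) + q ^ m * r / (1 - r)) := by
  have hhead : ∑ j ∈ Finset.range m, q ^ min m (j + 1) * r ^ (j + 1 - m)
      = q * (1 - q ^ m) / (1 - q) := by
    have hterm : ∀ j ∈ Finset.range m, q ^ min m (j + 1) * r ^ (j + 1 - m) = q * q ^ j := by
      intro j hj
      rw [min_eq_right (Finset.mem_range.mp hj), Nat.sub_eq_zero_of_le (Finset.mem_range.mp hj)]
      ring
    rw [Finset.sum_congr rfl hterm, ← Finset.mul_sum, geom_sum_eq hq,
      ← neg_div_neg_eq, neg_sub, neg_sub, mul_div_assoc]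
  have htail : HasSum (fun i : ℕ => q ^ min m (i + m + 1) * r ^ (i + m + 1 - m))
      (q ^ m * r / (1 - r)) := by
    have hterm : ∀ i : ℕ, q ^ min m (i + m + 1) * r ^ (i + m + 1 - m) = q ^ m * r * r ^ i := by
      intro i
      rw [min_eq_left (by omega), show i + m + 1 - m = i + 1 by omega]
      ring
    simpa only [hterm, div_eq_mul_inv] using (hasSum_geometric_of_norm_lt_one hr).mul_left _
  rw [← hasSum_nat_add_iff' m, hhead, add_sub_cancel_left]
  exact htail

theorem norm_natCast_cpow_lt_one {p : ℕ} (hp : 1 < p) {z : ℂ} (hz : z.re < 0) :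
    ‖(p : ℂ) ^ z‖ < 1 := by
  rw [Complex.norm_natCast_cpow_of_pos (by omega)]
  exact Real.rpow_lt_one_of_one_lt_of_neg (by exact_mod_cast hp) hz

theorem natCast_pow_cpow_mul_cpow_eq {p : ℕ} (hp : p ≠ 0) {k n : ℕ} (hkn : k ≤ n) (a d : ℂ) :
    ((p : ℂ) ^ k) ^ a * (p : ℂ) ^ (-(n : ℂ) * (a + d))
      = ((p : ℂ) ^ (-d)) ^ k * ((p : ℂ) ^ (-(a + d))) ^ (n - k) := by
  have hpC : (p : ℂ) ≠ 0 := Nat.cast_ne_zero.mpr hp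
  rw [← Complex.natCast_cpow_natCast_mul, ← Complex.cpow_nat_mul, ← Complex.cpow_nat_mul,
    ← Complex.cpow_add _ _ hpC, ← Complex.cpow_add _ _ hpC, Nat.cast_sub hkn]
  ring_nf

theorem local_sum_dividing_general (p : ℕ) (hp : p.Prime) (m : ℕ) (a b c : ℂ)
    (h1 : 0 < (b + c).re) (h2 : 0 < (a + b + c).re) :
    (∑' j : ℕ, ((p : ℂ) ^ (min m (j + 1) : ℕ)) ^ a * (p : ℂ) ^ (-((j : ℂ) + 1) * (a + b + c)))
      = (p : ℂ) ^ (-b - c) *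
          (1 - (p : ℂ) ^ (-a - b - c) - (p : ℂ) ^ ((m : ℂ) * (-b - c)) +
            (p : ℂ) ^ (-a) * (p : ℂ) ^ ((m : ℂ) * (-b - c))) /
        ((1 - (p : ℂ) ^ (-b - c)) * (1 - (p : ℂ) ^ (-a - b - c))) := by
  have hsummand : ∀ j : ℕ, ((p : ℂ) ^ (min m (j + 1) : ℕ)) ^ a
      * (p : ℂ) ^ (-((j : ℂ) + 1) * (a + b + c))
      = ((p : ℂ) ^ (-b - c)) ^ min m (j + 1) * ((p : ℂ) ^ (-a - b - c)) ^ (j + 1 - m) := by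
    intro j
    rw [show j + 1 - m = j + 1 - min m (j + 1) by omega, show -b - c = -(b + c) by ring,
      show -a - b - c = -(a + (b + c)) by ring,
      ← natCast_pow_cpow_mul_cpow_eq hp.ne_zero (min_le_right m (j + 1)), add_assoc a]
    push_cast
    ring_nf
  have hpa : (p : ℂ) ^ (-a) * (p : ℂ) ^ (-b - c) = (p : ℂ) ^ (-a - b - c) := by
    rw [← Complex.cpow_add _ _ (Nat.cast_ne_zero.mpr hp.ne_zero)]
    ring_nf
  rw [tsum_congr hsummand, Complex.cpow_nat_mul]
  set q := (p : ℂ) ^ (-b - c)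
  set r := (p : ℂ) ^ (-a - b - c)
  simp only [Complex.add_re] at h1 h2
  have hq : ‖q‖ < 1 := norm_natCast_cpow_lt_one hp.one_lt <| by
    simp only [Complex.sub_re, Complex.neg_re]; linarith
  have hr : ‖r‖ < 1 := norm_natCast_cpow_lt_one hp.one_lt <| by
    simp only [Complex.sub_re, Complex.neg_re]; linarith
  have hq1 : q ≠ 1 := by rintro h; simp [h] at hq
  have hr1 : r ≠ 1 := by rintro h; simp [h] at hr
  rw [(hasSum_pow_min_mul_pow_sub hq1 hr m).tsum_eq]
  field_simp [sub_ne_zero.mpr hq1.symm, sub_ne_zero.mpr hr1.symm]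
  rw [← hpa]
  ring

/-- Local sum at p | h: Σ_{j=1}^∞ (p^{h_p},p^j)^a p^{-j(a+b+c)}
= p^{-b-c}(1 - p^{-a-b-c} - p^{h_p(-b-c)} + p^{-a} p^{h_p(-b-c)}) /
((1-p^{-b-c})(1-p^{-a-b-c})). -/
theorem local_sum_dividing (p : ℕ) (hp : p.Prime) (m : ℕ) (hm : 1 ≤ m) (a b c : ℂ)
    (h1 : 0 < (b + c).re) (h2 : 0 < (a + b + c).re) :
    (∑' j : ℕ, ((p : ℂ) ^ (min m (j + 1) : ℕ)) ^ a * (p : ℂ) ^ (-((j : ℂ) + 1) * (a + b + c)))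
      = (p : ℂ) ^ (-b - c) *
          (1 - (p : ℂ) ^ (-a - b - c) - (p : ℂ) ^ ((m : ℂ) * (-b - c)) +
            (p : ℂ) ^ (-a) * (p : ℂ) ^ ((m : ℂ) * (-b - c))) /
        ((1 - (p : ℂ) ^ (-b - c)) * (1 - (p : ℂ) ^ (-a - b - c))) :=
  local_sum_dividing_general p hp m a b c h1 h2
end

section
/- For a prime p, a positive integer h_p, and complex a, b, c with Re(b+c) > 0 and Re(a+b+c) > 0 and Re(c) > 0, 1 + (1 - p^c) Σ_{j≥1} (p^{h_p}, p^j)^a p^{-j(a+b+c)} = ((1 - p^{-b})(1 - p^{-a-b-c}) + p^{-b}(1 - p^{-a})(1 - p^{-c}) p^{h_p(-b-c)}) / ((1 - p^{-b-c})(1 - p^{-a-b-c})). -/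
/-!
Write `A = p^{-a}`, `B = p^{-b}`, `C = p^{-c}`. The `j`-th term of the series is
`(p^a)^{min(h_p, j+1)} (ABC)^{j+1}`: for `j + 1 ≤ h_p` it is `(BC)^{j+1}`, a finite geometric
sum, and beyond that it is `A^{-h_p} (ABC)^{j+1}`, a convergent geometric tail since
`|ABC| < 1`. Adding the two closed forms is a rational identity in `A`, `B`, `C`.
-/

theorem one_sub_ne_zero_of_norm_lt_one {K : Type*} [NormedDivisionRing K] {r : K}
    (hr : ‖r‖ < 1) : 1 - r ≠ 0 :=
  sub_ne_zero.2 fun h => by simp [← h] at hr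

theorem tsum_pow_min_mul_pow_succ {K : Type*} [NormedField K] {r : K} (hr : ‖r‖ < 1)
    (z : K) (m : ℕ) :
    ∑' j : ℕ, z ^ min m (j + 1) * r ^ (j + 1)
      = ∑ i ∈ Finset.range m, (z * r) ^ (i + 1) + z ^ m * r ^ (m + 1) / (1 - r) := by
  set f : ℕ → K := fun j => z ^ min m (j + 1) * r ^ (j + 1)
  have hhead : ∀ i ∈ Finset.range m, f i = (z * r) ^ (i + 1) := fun i hi => by
    simp only [f, min_eq_right (Nat.succ_le_of_lt (Finset.mem_range.1 hi)), mul_pow]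
  have htail : ∀ j, f (j + m) = z ^ m * r ^ (m + 1) * r ^ j := fun j => by
    simp only [f, min_eq_left (by omega : m ≤ j + m + 1)]
    ring
  have hsum : Summable f :=
    (summable_nat_add_iff m).1 <| by
      simpa only [htail] using (summable_geometric_of_norm_lt_one hr).mul_left _
  rw [← hsum.sum_add_tsum_nat_add m, Finset.sum_congr rfl hhead, tsum_congr htail,
    tsum_mul_left, tsum_geometric_of_norm_lt_one hr, div_eq_mul_inv]

theorem local_factor_identity {K : Type*} [Field K] {A B C : K} (hA : A ≠ 0) (hC : C ≠ 0)
    (hBC : 1 - B * C ≠ 0) (hABC : 1 - A * B * C ≠ 0) (m : ℕ) :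
    1 + (1 - C⁻¹) * (∑ i ∈ Finset.range m, (B * C) ^ (i + 1)
        + A⁻¹ ^ m * (A * B * C) ^ (m + 1) / (1 - A * B * C))
      = ((1 - B) * (1 - A * B * C) + B * (1 - A) * (1 - C) * (B * C) ^ m) /
        ((1 - B * C) * (1 - A * B * C)) := by
  have hgeom : ∑ i ∈ Finset.range m, (B * C) ^ (i + 1)
      = B * C * (1 - (B * C) ^ m) / (1 - B * C) := by
    rw [eq_div_iff hBC]
    simp_rw [pow_succ', ← Finset.mul_sum]
    rw [mul_assoc, geom_sum_mul_neg]
  have htail : A⁻¹ ^ m * (A * B * C) ^ (m + 1) = A * B * C * (B * C) ^ m := by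
    rw [mul_assoc A, mul_pow A, pow_succ', inv_pow]
    field_simp
    ring
  rw [hgeom, htail]
  -- `field_simp` only cancels denominators stated in its own normal form.
  have : 1 - C * B ≠ 0 := by rwa [mul_comm]
  have : 1 - C * B * A ≠ 0 := by convert hABC using 2; ring
  field_simp
  ring

theorem Complex.norm_natCast_cpow_neg_lt_one {p : ℕ} (hp : 1 < p) {s : ℂ} (hs : 0 < s.re) :
    ‖(p : ℂ) ^ (-s)‖ < 1 := by
  rw [Complex.norm_natCast_cpow_of_pos (by omega)]
  exact Real.rpow_lt_one_of_one_lt_of_neg (by exact_mod_cast hp) (by simpa using hs)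

theorem Complex.natCast_pow_cpow (p n : ℕ) (s : ℂ) : ((p : ℂ) ^ n) ^ s = ((p : ℂ) ^ s) ^ n := by
  rw [← Complex.natCast_cpow_natCast_mul, Complex.cpow_nat_mul]

theorem Complex.cpow_neg_succ_mul (x : ℂ) (j : ℕ) (s : ℂ) :
    x ^ (-((j : ℂ) + 1) * s) = (x ^ (-s)) ^ (j + 1) := by
  rw [← Complex.cpow_nat_mul]
  push_cast
  ring_nf

theorem local_factor_dividing_general (p : ℕ) (hp : p.Prime) (m : ℕ) (a b c : ℂ)
    (h1 : 0 < (b + c).re) (h2 : 0 < (a + b + c).re) :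
    1 + (1 - (p : ℂ) ^ c) *
        ∑' j : ℕ, ((p : ℂ) ^ (min m (j + 1) : ℕ)) ^ a * (p : ℂ) ^ (-((j : ℂ) + 1) * (a + b + c))
      = ((1 - (p : ℂ) ^ (-b)) * (1 - (p : ℂ) ^ (-a - b - c)) +
          (p : ℂ) ^ (-b) * (1 - (p : ℂ) ^ (-a)) * (1 - (p : ℂ) ^ (-c)) *
            (p : ℂ) ^ ((m : ℂ) * (-b - c))) /
        ((1 - (p : ℂ) ^ (-b - c)) * (1 - (p : ℂ) ^ (-a - b - c))) := by
  have hp0 : (p : ℂ) ≠ 0 := Nat.cast_ne_zero.2 hp.ne_zero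
  have hABC : (p : ℂ) ^ (-a - b - c) = (p : ℂ) ^ (-a) * (p : ℂ) ^ (-b) * (p : ℂ) ^ (-c) := by
    rw [← Complex.cpow_add _ _ hp0, ← Complex.cpow_add _ _ hp0, sub_eq_add_neg, sub_eq_add_neg]
  have hBC : (p : ℂ) ^ (-b - c) = (p : ℂ) ^ (-b) * (p : ℂ) ^ (-c) := by
    rw [← Complex.cpow_add _ _ hp0, sub_eq_add_neg]
  have hr : ‖(p : ℂ) ^ (-a - b - c)‖ < 1 := by
    simpa only [neg_add'] using Complex.norm_natCast_cpow_neg_lt_one hp.one_lt h2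
  have hx : ‖(p : ℂ) ^ (-b - c)‖ < 1 := by
    simpa only [neg_add'] using Complex.norm_natCast_cpow_neg_lt_one hp.one_lt h1
  have hterm (j : ℕ) :
      ((p : ℂ) ^ (min m (j + 1) : ℕ)) ^ a * (p : ℂ) ^ (-((j : ℂ) + 1) * (a + b + c))
        = ((p : ℂ) ^ a) ^ min m (j + 1) * ((p : ℂ) ^ (-a - b - c)) ^ (j + 1) := by
    rw [Complex.natCast_pow_cpow, Complex.cpow_neg_succ_mul, neg_add', neg_add']
  have hshift : (p : ℂ) ^ a * (p : ℂ) ^ (-a - b - c) = (p : ℂ) ^ (-b - c) := by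
    rw [← Complex.cpow_add _ _ hp0]
    ring_nf
  have hinv : ∀ s : ℂ, (p : ℂ) ^ s = ((p : ℂ) ^ (-s))⁻¹ := fun s => by
    rw [Complex.cpow_neg, inv_inv]
  rw [tsum_congr hterm, tsum_pow_min_mul_pow_succ hr, hshift, Complex.cpow_nat_mul, hinv a, hinv c,
    hABC, hBC]
  have hne : ∀ s : ℂ, (p : ℂ) ^ s ≠ 0 := fun _ => Complex.cpow_ne_zero_iff.2 (Or.inl hp0)
  exact local_factor_identity (hne _) (hne _) (hBC ▸ one_sub_ne_zero_of_norm_lt_one hx)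
    (hABC ▸ one_sub_ne_zero_of_norm_lt_one hr) m

/-- Local Euler factor at p^{h_p} || h:
1 + (1-p^c) Σ_{j≥1} (p^{h_p},p^j)^a p^{-j(a+b+c)}
= ((1-p^{-b})(1-p^{-a-b-c}) + p^{-b}(1-p^{-a})(1-p^{-c}) p^{h_p(-b-c)}) /
((1-p^{-b-c})(1-p^{-a-b-c})). -/
theorem local_factor_dividing (p : ℕ) (hp : p.Prime) (m : ℕ) (hm : 1 ≤ m) (a b c : ℂ)
    (h1 : 0 < (b + c).re) (h2 : 0 < (a + b + c).re) (h3 : 0 < c.re) :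
    1 + (1 - (p : ℂ) ^ c) *
        ∑' j : ℕ, ((p : ℂ) ^ (min m (j + 1) : ℕ)) ^ a * (p : ℂ) ^ (-((j : ℂ) + 1) * (a + b + c))
      = ((1 - (p : ℂ) ^ (-b)) * (1 - (p : ℂ) ^ (-a - b - c)) +
          (p : ℂ) ^ (-b) * (1 - (p : ℂ) ^ (-a)) * (1 - (p : ℂ) ^ (-c)) *
            (p : ℂ) ^ ((m : ℂ) * (-b - c))) /
        ((1 - (p : ℂ) ^ (-b - c)) * (1 - (p : ℂ) ^ (-a - b - c))) :=
  local_factor_dividing_general p hp m a b c h1 h2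
end
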